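/- arXiv:2506.12193 — 2 statements merged into one kernel-verified Lean document; each statement's English description precedes it below -/
import Mathlib

section
/- For any real δ with 0 < δ ≤ 1/2, (1+δ)·H(δ/(1+δ)) ≤ 2·H(δ), where H is the binary entropy function. -/
/-!
Measured in nats, `(1 + δ) H(δ/(1+δ)) = -δ log δ + (1 + δ) log (1 + δ)`, so the claim becomes
`negMulLog (1 + δ) + negMulLog δ + 2 negMulLog (1 - δ) ≥ 0`. From `log y ≤ y - 1` each
`negMulLog y` is at least `y (1 - y)`, and these three lower bounds add up to `2δ (1 - 2δ) ≥ 0`.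
-/

open Real

/-- The binary entropy function `H(x) = -x·log₂ x - (1-x)·log₂(1-x)`. -/
noncomputable def H (x : ℝ) : ℝ := -x * Real.logb 2 x - (1 - x) * Real.logb 2 (1 - x)

lemma H_eq_binEntropy_div_log_two (x : ℝ) : H x = binEntropy x / log 2 := by
  rw [H, binEntropy_eq_negMulLog_add_negMulLog_one_sub, negMulLog, negMulLog, logb, logb]
  ring

lemma mul_one_sub_le_negMulLog {x : ℝ} (hx : 0 ≤ x) : x * (1 - x) ≤ negMulLog x := by
  rcases hx.eq_or_lt with rfl | hx
  · simp
  · have := mul_le_mul_of_nonneg_left (log_le_sub_one_of_pos hx) hx.le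
    rw [negMulLog]
    linarith

lemma mul_binEntropy_div_one_add {x : ℝ} (hx : 1 + x ≠ 0) :
    (1 + x) * binEntropy (x / (1 + x)) = negMulLog x - negMulLog (1 + x) := by
  have hcompl : 1 - x / (1 + x) = (1 + x)⁻¹ := by field_simp; ring
  rw [binEntropy_eq_negMulLog_add_negMulLog_one_sub, hcompl, div_eq_mul_inv, negMulLog_mul]
  simp only [negMulLog, log_inv]
  field_simp
  ring

/-- For `0 < δ ≤ 1/2`, we have `(1+δ)·H(δ/(1+δ)) ≤ 2·H(δ)`. -/
theorem entropy_ratio_bound (δ : ℝ) (h0 : 0 < δ) (h1 : δ ≤ 1 / 2) :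
    (1 + δ) * H (δ / (1 + δ)) ≤ 2 * H δ := by
  rw [H_eq_binEntropy_div_log_two, H_eq_binEntropy_div_log_two, mul_div_assoc', mul_div_assoc',
    div_le_div_iff_of_pos_right (log_pos one_lt_two), mul_binEntropy_div_one_add (by linarith),
    binEntropy_eq_negMulLog_add_negMulLog_one_sub]
  have hδ := mul_one_sub_le_negMulLog h0.le
  have hadd := mul_one_sub_le_negMulLog (x := 1 + δ) (by linarith)
  have hsub := mul_one_sub_le_negMulLog (x := 1 - δ) (by linarith)
  linarith [mul_nonneg h0.le (sub_nonneg.2 h1)]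
end

section
/- Let n be a positive integer, 0 < δ ≤ 1/2, and y a binary string. Then the number of binary strings of length n at edit distance at most δn from y is at most 2^(5·H(δ)·n), where H is the binary entropy function. -/
namespace Levenshtein

structure Cost (α β δ : Type*) where
  delete : α → δ
  insert : β → δ
  substitute : α → β → δ

end Levenshtein

def levenshtein {α β δ : Type*} [AddZeroClass δ] [Min δ] (C : Levenshtein.Cost α β δ) :
    List α → List β → δ
  | [], ys => ys.foldr (fun y r => C.insert y + r) 0
  | x :: xs, [] => C.delete x + levenshtein C xs []
  | x :: xs, y :: ys =>
    min (C.delete x + levenshtein C xs (y :: ys))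
      (min (C.insert y + levenshtein C (x :: xs) ys) (C.substitute x y + levenshtein C xs ys))
termination_by xs ys => xs.length + ys.length

/-- Cost structure where insertions and deletions cost 1 and substitutions cost 2
(so `levenshtein` computes the minimum number of insertions and deletions). -/
def idCost : Levenshtein.Cost (ZMod 2) (ZMod 2) ℕ where
  delete _ := 1
  insert _ := 1
  substitute a b := if a = b then 0 else 2

/-- Edit distance: minimum number of single-symbol insertions and deletions. -/
def editDist (x y : List (ZMod 2)) : ℕ := levenshtein idCost x y

/-- `Bn n y d`: binary strings of length `n` at edit distance at most `d` from `y`. -/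
def Bn (n : ℕ) (y : List (ZMod 2)) (d : ℝ) : Set (List (ZMod 2)) :=
  {x | x.length = n ∧ (editDist x y : ℝ) ≤ d}

/-!
If `editDist x y ≤ d`, then `x` and `y` have a common subsequence `z` such that `z` arises from
`y` by at most `d` deletions and `x` arises from `z` by at most `d` insertions. So `x` is
determined by `z` and by a template of length `n` recording where the inserted letters go and
what they are. There are at most `2 ^ d * ∑_{i ≤ d} (n choose i)` choices for each of them, and
`∑_{i ≤ δn} (n choose i) ≤ 2 ^ (H(δ) n)` together with `δ ≤ H(δ)` bounds their product by
`2 ^ (4 H(δ) n)`.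
-/

open Finset

lemma editDist_nil_left (y : List (ZMod 2)) : editDist [] y = y.length := by
  induction y with
  | nil => simp [editDist, levenshtein.eq_1]
  | cons b ys ih =>
    simp only [editDist, levenshtein.eq_1, List.foldr_cons, idCost] at ih ⊢
    rw [ih, List.length_cons, add_comm]

lemma editDist_nil_right (x : List (ZMod 2)) : editDist x [] = x.length := by
  induction x with
  | nil => simp [editDist, levenshtein.eq_1]
  | cons a xs ih =>
    simp only [editDist, levenshtein.eq_2, idCost] at ih ⊢
    rw [ih, List.length_cons, add_comm]

lemma editDist_cons_cons (a b : ZMod 2) (xs ys : List (ZMod 2)) :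
    editDist (a :: xs) (b :: ys) = min (editDist xs (b :: ys) + 1)
      (min (editDist (a :: xs) ys + 1) (editDist xs ys + if a = b then 0 else 2)) := by
  simp only [editDist, levenshtein.eq_3, idCost, add_comm]

theorem exists_common_sublist (x y : List (ZMod 2)) :
    ∃ z : List (ZMod 2), z.Sublist x ∧ z.Sublist y ∧
      x.length + y.length ≤ 2 * z.length + editDist x y := by
  induction x, y using levenshtein.induct with
  | case1 ys => exact ⟨[], List.nil_sublist _, List.nil_sublist _, by simp [editDist_nil_left]⟩
  | case2 a xs _ => exact ⟨[], List.nil_sublist _, List.nil_sublist _, by simp [editDist_nil_right]⟩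
  | case3 a xs b ys ih_del ih_ins ih_sub =>
    obtain ⟨z₁, hx₁, hy₁, h₁⟩ := ih_del
    obtain ⟨z₂, hx₂, hy₂, h₂⟩ := ih_ins
    obtain ⟨z₃, hx₃, hy₃, h₃⟩ := ih_sub
    have hz₁ := hx₁.length_le
    simp only [List.length_cons] at *
    rw [editDist_cons_cons]
    rcases min_choice (editDist xs (b :: ys) + 1)
      (min (editDist (a :: xs) ys + 1) (editDist xs ys + if a = b then 0 else 2)) with h | h <;>
      rw [h]
    · exact ⟨z₁, hx₁.cons a, hy₁, by omega⟩
    rcases min_choice (editDist (a :: xs) ys + 1) (editDist xs ys + if a = b then 0 else 2)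
      with h | h <;> rw [h]
    · exact ⟨z₂, hx₂, hy₂.cons b, by omega⟩
    split_ifs with hab
    · subst hab
      exact ⟨a :: z₃, hx₃.cons_cons a, hy₃.cons_cons a, by simp only [List.length_cons]; omega⟩
    · exact ⟨z₃, hx₃.cons a, hy₃.cons b, by omega⟩

def binomSum (n k : ℕ) : ℕ := ∑ i ∈ range (k + 1), n.choose i

@[simp] lemma binomSum_zero_left (k : ℕ) : binomSum 0 k = 1 := by
  simp [binomSum, sum_range_succ', Nat.choose_zero_succ]

@[simp] lemma binomSum_zero_right (n : ℕ) : binomSum n 0 = 1 := by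
  simp [binomSum]

lemma binomSum_succ_succ (n k : ℕ) :
    binomSum (n + 1) (k + 1) = binomSum n (k + 1) + binomSum n k := by
  simp only [binomSum, sum_range_succ' _ (k + 1), Nat.choose_succ_succ, sum_add_distrib,
    Nat.choose_zero_right]
  ring

lemma binomSum_le_binomSum_succ (n k : ℕ) : binomSum n k ≤ binomSum n (k + 1) :=
  sum_le_sum_of_subset (range_subset_range.2 (by omega))

lemma binomSum_succ_le (n k : ℕ) : binomSum (n + 1) k ≤ 2 * binomSum n k := by
  cases k with
  | zero => simp
  | succ k => rw [binomSum_succ_succ]; linarith [binomSum_le_binomSum_succ n k]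

lemma binomSum_add_le (n k j : ℕ) : binomSum (n + j) k ≤ 2 ^ j * binomSum n k := by
  induction j with
  | zero => simp
  | succ j ih =>
    calc binomSum (n + j + 1) k ≤ 2 * binomSum (n + j) k := binomSum_succ_le _ _
      _ ≤ 2 * (2 ^ j * binomSum n k) := by omega
      _ = 2 ^ (j + 1) * binomSum n k := by ring

section Templates

variable {α : Type*}

def fillHoles : List α → List (Option α) → List α
  | _, [] => []
  | z, some b :: t => b :: fillHoles z t
  | [], none :: t => fillHoles [] t
  | a :: z, none :: t => a :: fillHoles z t

lemma List.Sublist.exists_fillHoles_eq {z x : List α} (h : z.Sublist x) :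
    ∃ t : List (Option α), t.length = x.length ∧
      t.countP (·.isSome) + z.length = x.length ∧ fillHoles z t = x := by
  induction h with
  | slnil => exact ⟨[], rfl, rfl, rfl⟩
  | @cons z x a _ ih =>
    obtain ⟨t, hlen, hcount, rfl⟩ := ih
    exact ⟨some a :: t, by simp [hlen], by simp; omega, rfl⟩
  | @cons_cons z x a _ ih =>
    obtain ⟨t, hlen, hcount, rfl⟩ := ih
    exact ⟨none :: t, by simp [hlen], by simp; omega, rfl⟩

variable (α) [Fintype α] [DecidableEq α]

def holeTemplates : ℕ → ℕ → Finset (List (Option α))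
  | 0, _ => {[]}
  | n + 1, 0 => (holeTemplates n 0).image (none :: ·)
  | n + 1, k + 1 => (holeTemplates n (k + 1)).image (none :: ·) ∪
      (univ ×ˢ holeTemplates n k).image fun p => some p.1 :: p.2

lemma mem_holeTemplates {t : List (Option α)} {k : ℕ} (ht : t.countP (·.isSome) ≤ k) :
    t ∈ holeTemplates α t.length k := by
  induction t generalizing k with
  | nil => simp [holeTemplates]
  | cons o t ih =>
    cases o with
    | none =>
      have := ih (k := k) (by simpa using ht)
      cases k <;> simp [holeTemplates, this]
    | some a =>
      cases k with
      | zero => simp at ht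
      | succ k =>
        have := ih (k := k) (by simp at ht; omega)
        simp [holeTemplates, this]

lemma card_holeTemplates_le [Nonempty α] (n k : ℕ) :
    (holeTemplates α n k).card ≤ Fintype.card α ^ k * binomSum n k := by
  induction n generalizing k with
  | zero =>
    simpa [holeTemplates] using Nat.one_le_pow _ _ (Fintype.card_pos (α := α))
  | succ n ih =>
    cases k with
    | zero => simpa [holeTemplates] using (card_image_le).trans (ih 0)
    | succ k =>
      calc (holeTemplates α (n + 1) (k + 1)).card
          ≤ (holeTemplates α n (k + 1)).card + Fintype.card α * (holeTemplates α n k).card := by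
            simp only [holeTemplates]
            refine (card_union_le _ _).trans (add_le_add card_image_le (card_image_le.trans ?_))
            rw [card_product, card_univ]
        _ ≤ Fintype.card α ^ (k + 1) * binomSum n (k + 1) +
              Fintype.card α * (Fintype.card α ^ k * binomSum n k) :=
            add_le_add (ih _) (Nat.mul_le_mul_left _ (ih _))
        _ = Fintype.card α ^ (k + 1) * binomSum (n + 1) (k + 1) := by
            rw [binomSum_succ_succ]; ring

end Templates

section Deletions

variable {α : Type*} [DecidableEq α]

def deletions (y : List α) (d : ℕ) : Finset (List α) :=
  (range (d + 1)).biUnion fun i => (y.sublistsLen (y.length - i)).toFinset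

lemma mem_deletions {y z : List α} {d : ℕ} (h : z.Sublist y) (hlen : y.length ≤ z.length + d) :
    z ∈ deletions y d := by
  refine mem_biUnion.2 ⟨y.length - z.length, mem_range.2 (by omega), ?_⟩
  rw [List.mem_toFinset, List.mem_sublistsLen]
  exact ⟨h, by have := h.length_le; omega⟩

lemma card_deletions_le (y : List α) {d N : ℕ} (hy : y.length ≤ N) (hd : d ≤ N) :
    (deletions y d).card ≤ binomSum N d := by
  refine card_biUnion_le.trans (sum_le_sum fun i hi => ?_)
  rw [mem_range] at hi
  refine (List.toFinset_card_le _).trans ?_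
  rw [List.length_sublistsLen]
  by_cases hiy : i ≤ y.length
  · rw [Nat.choose_symm hiy]
    exact Nat.choose_le_choose i hy
  · rw [Nat.sub_eq_zero_of_le (by omega), Nat.choose_zero_right]
    exact Nat.choose_pos (by omega)

end Deletions

lemma length_le_length_add_editDist (x y : List (ZMod 2)) :
    y.length ≤ x.length + editDist x y := by
  obtain ⟨z, hzx, -, hlen⟩ := exists_common_sublist x y
  have := hzx.length_le
  omega

lemma exists_fillHoles_eq_of_editDist_le {x y : List (ZMod 2)} {d : ℕ} (h : editDist x y ≤ d) :
    ∃ z ∈ deletions y d, ∃ t ∈ holeTemplates (ZMod 2) x.length d, fillHoles z t = x := by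
  obtain ⟨z, hzx, hzy, hlen⟩ := exists_common_sublist x y
  obtain ⟨t, htx, hcount, rfl⟩ := hzx.exists_fillHoles_eq
  have := hzx.length_le
  have := hzy.length_le
  refine ⟨z, mem_deletions hzy (by omega), t, ?_, rfl⟩
  rw [← htx]
  exact mem_holeTemplates _ (by omega)

theorem ncard_Bn_le (n d : ℕ) (y : List (ZMod 2)) :
    (Bn n y d).ncard ≤ (2 ^ d * binomSum n d) ^ 2 := by
  rcases (Bn n y d).eq_empty_or_nonempty with hempty | ⟨x, hxn, hx⟩
  · simp [hempty]
  have hy : y.length ≤ n + d :=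
    hxn ▸ (length_le_length_add_editDist x y).trans (by gcongr; exact_mod_cast hx)
  let cover := (deletions y d ×ˢ holeTemplates (ZMod 2) n d).image fun p => fillHoles p.1 p.2
  have hsub : Bn n y d ⊆ cover := by
    rintro w ⟨hw, hwy⟩
    obtain ⟨z, hz, t, ht, rfl⟩ :=
      exists_fillHoles_eq_of_editDist_le (d := d) (by exact_mod_cast hwy)
    rw [hw] at ht
    exact mem_coe.2 (mem_image.2 ⟨(z, t), mem_product.2 ⟨hz, ht⟩, rfl⟩)
  calc (Bn n y d).ncard ≤ cover.card :=
        (Set.ncard_le_ncard hsub (finite_toSet _)).trans_eq (Set.ncard_coe_finset _)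
    _ ≤ (deletions y d).card * (holeTemplates (ZMod 2) n d).card :=
        card_image_le.trans_eq (card_product _ _)
    _ ≤ binomSum (n + d) d * (2 ^ d * binomSum n d) :=
        Nat.mul_le_mul (card_deletions_le y hy (by omega))
          (by simpa using card_holeTemplates_le (ZMod 2) n d)
    _ ≤ (2 ^ d * binomSum n d) ^ 2 := by
        rw [sq]; exact Nat.mul_le_mul_right _ (binomSum_add_le n d d)

lemma self_le_H {δ : ℝ} (h0 : 0 < δ) (h : δ ≤ 1 / 2) : δ ≤ H δ := by
  have hlogδ : Real.logb 2 δ ≤ -1 :=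
    calc Real.logb 2 δ ≤ Real.logb 2 (1 / 2) := Real.logb_le_logb_of_le (by norm_num) h0 h
      _ = -1 := by rw [one_div, Real.logb_inv, Real.logb_self_eq_one (by norm_num)]
  have hlog1δ : Real.logb 2 (1 - δ) ≤ 0 :=
    Real.logb_nonpos (by norm_num) (by linarith) (by linarith)
  unfold H
  nlinarith

lemma two_rpow_neg_H_mul_le {δ : ℝ} (h0 : 0 < δ) (h : δ ≤ 1 / 2) {n i : ℕ} (hi : (i : ℝ) ≤ δ * n)
    (hin : i ≤ n) : (2 : ℝ) ^ (-(H δ * n)) ≤ δ ^ i * (1 - δ) ^ (n - i) := by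
  have h1 : 0 < 1 - δ := by linarith
  rw [← Real.log_le_log_iff (by positivity) (by positivity), Real.log_rpow two_pos,
    Real.log_mul (by positivity) (by positivity), Real.log_pow, Real.log_pow, Nat.cast_sub hin]
  have hlog : Real.log δ ≤ Real.log (1 - δ) := Real.log_le_log h0 (by linarith)
  have hlog2 : 0 < Real.log 2 := Real.log_pos one_lt_two
  have hH : H δ * Real.log 2 = -(δ * Real.log δ + (1 - δ) * Real.log (1 - δ)) := by
    unfold H Real.logb; field_simp; ring
  -- the difference of the two sides is `(δ * n - i) * (log (1 - δ) - log δ) ≥ 0`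
  nlinarith [mul_nonneg (sub_nonneg.2 hi) (sub_nonneg.2 hlog)]

lemma binomSum_le_two_rpow_H {δ : ℝ} (h0 : 0 < δ) (h : δ ≤ 1 / 2) {n d : ℕ}
    (hd : (d : ℝ) ≤ δ * n) : (binomSum n d : ℝ) ≤ 2 ^ (H δ * n) := by
  have hdn : d ≤ n := by
    exact_mod_cast (show (d : ℝ) ≤ n by nlinarith [(n.cast_nonneg : (0 : ℝ) ≤ n)])
  have hsum : (binomSum n d : ℝ) * 2 ^ (-(H δ * n)) ≤ 1 :=
    calc (binomSum n d : ℝ) * 2 ^ (-(H δ * n))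
        = ∑ i ∈ range (d + 1), (n.choose i : ℝ) * 2 ^ (-(H δ * n)) := by
          rw [binomSum, Nat.cast_sum, sum_mul]
      _ ≤ ∑ i ∈ range (d + 1), (n.choose i : ℝ) * (δ ^ i * (1 - δ) ^ (n - i)) := by
          refine sum_le_sum fun i hi => mul_le_mul_of_nonneg_left ?_ (Nat.cast_nonneg _)
          have hi : i ≤ d := Nat.lt_succ_iff.1 (mem_range.1 hi)
          exact two_rpow_neg_H_mul_le h0 h (le_trans (by exact_mod_cast hi) hd) (hi.trans hdn)
      _ ≤ ∑ i ∈ range (n + 1), (n.choose i : ℝ) * (δ ^ i * (1 - δ) ^ (n - i)) :=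
          sum_le_sum_of_subset_of_nonneg (range_subset_range.2 (by omega)) fun i _ _ => by
            have : 0 < 1 - δ := by linarith
            positivity
      _ = (δ + (1 - δ)) ^ n := by rw [add_pow]; exact sum_congr rfl fun i _ => by ring
      _ = 1 := by simp
  rwa [Real.rpow_neg zero_le_two, ← div_eq_mul_inv, div_le_one (by positivity)] at hsum

theorem editBall_card_le_general (n : ℕ) (δ : ℝ) (hδ0 : 0 < δ) (hδ : δ ≤ 1 / 2)
    (y : List (ZMod 2)) :
    ((Bn n y (δ * n)).ncard : ℝ) ≤ 2 ^ (5 * H δ * n) := by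
  set d := ⌊δ * n⌋₊
  have hd : (d : ℝ) ≤ δ * n := Nat.floor_le (by positivity)
  have hball : Bn n y (δ * n) = Bn n y d := by
    ext x
    simp only [Bn, Set.mem_ofPred_eq, Nat.cast_le, d, Nat.le_floor_iff (by positivity : 0 ≤ δ * n)]
  have hHn : 0 ≤ H δ * n := mul_nonneg (hδ0.le.trans (self_le_H hδ0 hδ)) n.cast_nonneg
  have h2d : (2 : ℝ) ^ d ≤ 2 ^ (H δ * n) := by
    rw [← Real.rpow_natCast]
    exact Real.rpow_le_rpow_of_exponent_le one_le_two
      (hd.trans (mul_le_mul_of_nonneg_right (self_le_H hδ0 hδ) n.cast_nonneg))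
  calc ((Bn n y (δ * n)).ncard : ℝ) ≤ ((2 : ℝ) ^ d * binomSum n d) ^ 2 := by
        rw [hball]; exact_mod_cast ncard_Bn_le n d y
    _ ≤ (2 ^ (H δ * n) * 2 ^ (H δ * n)) ^ 2 := by
        gcongr
        exact binomSum_le_two_rpow_H hδ0 hδ hd
    _ = 2 ^ (4 * H δ * n) := by
        rw [← Real.rpow_add two_pos, ← Real.rpow_natCast, ← Real.rpow_mul zero_le_two]
        congr 1
        push_cast
        ring
    _ ≤ 2 ^ (5 * H δ * n) := Real.rpow_le_rpow_of_exponent_le one_le_two (by nlinarith)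

/-- The number of binary strings of length `n` at edit distance at most `δn` from
a string `y` is at most `2^(5·H(δ)·n)`. -/
theorem editBall_card_le (n : ℕ) (hn : 0 < n) (δ : ℝ) (hδ0 : 0 < δ) (hδ : δ ≤ 1 / 2)
    (y : List (ZMod 2)) :
    ((Bn n y (δ * n)).ncard : ℝ) ≤ 2 ^ (5 * H δ * n) :=
  editBall_card_le_general n δ hδ0 hδ y
end
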